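/- arXiv:2003.12460 — 5 statements merged into one kernel-verified Lean document; each statement's English description precedes it below -/
import Mathlib

section
/- For all real numbers α, β with α ≥ 0, β ≥ 0 and α + β > 0, we have min(α + β, (4/3)·(α + β/2)) ≤ (12/7)·((2/3)·α + β/2). Moreover, equality holds when α = β. -/
theorem stmt0 (α β : ℝ) (hα : α ≥ 0) (hβ : β ≥ 0) (hpos : α + β > 0) :
    min (α + β) ((4/3) * (α + β/2)) ≤ (12/7) * ((2/3) * α + β/2) ∧
    (α = β → min (α + β) ((4/3) * (α + β/2)) = (12/7) * ((2/3) * α + β/2)) := by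
  constructor
  · rcases le_total α β with h | h
    · exact le_trans (min_le_right _ _) (by nlinarith)
    · exact le_trans (min_le_left _ _) (by nlinarith)
  · intro h; subst h
    rw [min_eq_left (by nlinarith)]; ring
end

section
/- For all real numbers α, β with β ≥ 4 and 0 ≤ α ≤ β − 1, we have (649/500)·(3 + α + β/2) ≤ (2596/1375)·(3/2 + (2/3)·α + β/2), with equality when β = 4 and α = 3. -/
theorem stmt2 (α β : ℝ) (hβ : 4 ≤ β) (hα0 : 0 ≤ α) (hαβ : α ≤ β - 1) :
    (649/500) * (3 + α + β/2) ≤ (2596/1375) * (3/2 + (2/3) * α + β/2) ∧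
    (β = 4 → α = 3 → (649/500) * (3 + α + β/2) = (2596/1375) * (3/2 + (2/3) * α + β/2)) := by
  constructor
  · nlinarith
  · intro h1 h2; subst h1; subst h2; norm_num
end

section
/- For every real number x with 1/2 < x ≤ 2/3, we have min( (2x)·5/(19/6), 6/(19/6 + (x − 1/2)) ) ≤ 360/193. Specifically, if x ≤ 11/20 the first term is at most 33/19 ≤ 360/193, and if x > 11/20 the second term is less than 360/193. -/
theorem stmt6 (x : ℝ) (h1 : 1/2 < x) (h2 : x ≤ 2/3) :
    min ((2*x) * 5 / (19/6)) (6 / (19/6 + (x - 1/2))) ≤ 360/193 ∧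
    (x ≤ 11/20 → (2*x) * 5 / (19/6) ≤ 33/19 ∧ (33:ℝ)/19 ≤ 360/193) ∧
    (11/20 < x → 6 / (19/6 + (x - 1/2)) < 360/193) := by
  have hd : (0:ℝ) < 19/6 + (x - 1/2) := by linarith
  have hb : 11/20 < x → 6 / (19/6 + (x - 1/2)) < 360/193 := by
    intro hx
    rw [div_lt_iff₀ hd]
    nlinarith
  refine ⟨?_, ?_, hb⟩
  · rcases le_or_gt x (11/20) with hx | hx
    · exact le_trans (min_le_left _ _) (by rw [div_le_iff₀]; nlinarith; norm_num)
    · exact le_trans (min_le_right _ _) (le_of_lt (hb hx))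
  · intro hx
    constructor
    · rw [div_le_div_iff₀] <;> nlinarith
    · norm_num
end

section
/- Let m be a finite multiset of real numbers each of the form 2^{-k} for some natural number k, and let S be the sum of m. Then m can be partitioned into ⌊S⌋ sub-multisets each with sum exactly 1, together with (if S is not an integer) one remaining sub-multiset with sum S − ⌊S⌋ < 1. -/
/-!
Greedy packing. If every element of a multiset is a multiple of each smaller element, and the
target `t ≥ 0` is a multiple of every element, then any `t ≤ s.sum` is the sum of a sub-multiset:
the largest element `a` divides `t`, so either `t = 0` or `a ≤ t`, and then `t - a` is again a
multiple of all remaining elements (which divide `a`). Powers of `1/2` form such a chain and all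
divide `1`, so blocks of sum `1` can be split off `⌊S⌋` times; what remains has sum `S - ⌊S⌋`.
-/

namespace Multiset

variable {M : Type*} [AddCommMonoid M] [LinearOrder M] [IsOrderedCancelAddMonoid M]

theorem exists_le_sum_eq_of_nsmul_chain (s : Multiset M)
    (hchain : ∀ x ∈ s, ∀ y ∈ s, y ≤ x → ∃ k : ℕ, x = k • y)
    {t : M} (ht₀ : 0 ≤ t) (ht : ∀ x ∈ s, ∃ k : ℕ, t = k • x) (hts : t ≤ s.sum) :
    ∃ p ≤ s, p.sum = t := by
  induction s using Multiset.strongInductionOn generalizing t with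
  | ih s ih =>
  rcases eq_or_ne s 0 with rfl | hs
  · exact ⟨0, le_rfl, (le_antisymm hts ht₀).symm⟩
  obtain ⟨a, has, hmax⟩ := s.toFinset.exists_max_image id (by simpa using hs)
  rw [mem_toFinset] at has
  simp only [mem_toFinset, id] at hmax
  obtain ⟨_ | n, rfl⟩ := ht a has
  · exact ⟨0, zero_le _, by simp⟩
  have hs_eq : a ::ₘ s.erase a = s := cons_erase has
  have ha₀ : 0 ≤ a := (nsmul_nonneg_iff n.succ_ne_zero).1 ht₀
  obtain ⟨p, hp, hpsum⟩ := ih (s.erase a) (erase_lt.2 has)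
    (fun x hx y hy => hchain x (mem_of_mem_erase hx) y (mem_of_mem_erase hy))
    (nsmul_nonneg ha₀ n)
    (fun y hy => by
      obtain ⟨k, hk⟩ := hchain a has y (mem_of_mem_erase hy) (hmax y (mem_of_mem_erase hy))
      exact ⟨k * n, by rw [hk, mul_nsmul]⟩)
    (by
      rw [← hs_eq, sum_cons, succ_nsmul, add_comm] at hts
      exact le_of_add_le_add_left hts)
  exact ⟨a ::ₘ p, hs_eq ▸ cons_le_cons a hp, by rw [sum_cons, hpsum, succ_nsmul, add_comm]⟩

theorem exists_parts_sum_eq_of_nsmul_chain (s : Multiset M)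
    (hchain : ∀ x ∈ s, ∀ y ∈ s, y ≤ x → ∃ k : ℕ, x = k • y)
    {t : M} (ht₀ : 0 ≤ t) (ht : ∀ x ∈ s, ∃ k : ℕ, t = k • x) (n : ℕ) (hn : n • t ≤ s.sum) :
    ∃ parts : Multiset (Multiset M),
      parts.card = n ∧ (∀ p ∈ parts, p.sum = t) ∧ parts.sum ≤ s := by
  induction n generalizing s with
  | zero => exact ⟨0, rfl, by simp, by simp⟩
  | succ n ih =>
  have hts : t ≤ s.sum :=
    le_trans (le_add_of_nonneg_left (nsmul_nonneg ht₀ n)) (succ_nsmul t n ▸ hn)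
  obtain ⟨p, hp, hpsum⟩ := s.exists_le_sum_eq_of_nsmul_chain hchain ht₀ ht hts
  have hs_eq : p + (s - p) = s := add_tsub_cancel_of_le hp
  have hsub : ∀ x ∈ s - p, x ∈ s := fun x hx => mem_of_le (Multiset.sub_le_self s p) hx
  obtain ⟨parts, hcard, hparts, hle⟩ := ih (s - p)
    (fun x hx y hy => hchain x (hsub x hx) y (hsub y hy)) (fun x hx => ht x (hsub x hx))
    (by
      rw [← hs_eq, sum_add, hpsum, succ_nsmul, add_comm] at hn
      exact le_of_add_le_add_left hn)
  refine ⟨p ::ₘ parts, by rw [card_cons, hcard], ?_, ?_⟩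
  · intro q hq
    rcases mem_cons.1 hq with rfl | hq
    exacts [hpsum, hparts q hq]
  · rw [sum_cons, ← hs_eq]
    exact add_le_add_right hle p

end Multiset

theorem exists_two_inv_pow_eq_nsmul_of_le {i j : ℕ} (h : (2⁻¹ : ℝ) ^ j ≤ 2⁻¹ ^ i) :
    ∃ k : ℕ, (2⁻¹ : ℝ) ^ i = k • 2⁻¹ ^ j := by
  have hij : i ≤ j := (pow_le_pow_iff_right_of_lt_one₀ (by norm_num) (by norm_num)).1 h
  obtain ⟨d, rfl⟩ := Nat.exists_eq_add_of_le hij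
  refine ⟨2 ^ d, ?_⟩
  rw [nsmul_eq_mul, pow_add]
  push_cast
  rw [mul_left_comm, ← mul_pow]
  norm_num

theorem exists_parts_sum_eq_one_of_forall_eq_two_inv_pow (m : Multiset ℝ)
    (hm : ∀ x ∈ m, ∃ k : ℕ, x = 2⁻¹ ^ k) (n : ℕ) (hn : n ≤ m.sum) :
    ∃ parts : Multiset (Multiset ℝ),
      parts.card = n ∧ (∀ p ∈ parts, p.sum = 1) ∧ parts.sum ≤ m := by
  have hchain : ∀ x ∈ m, ∀ y ∈ m, y ≤ x → ∃ k : ℕ, x = k • y := by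
    intro x hx y hy hyx
    obtain ⟨i, rfl⟩ := hm x hx
    obtain ⟨j, rfl⟩ := hm y hy
    exact exists_two_inv_pow_eq_nsmul_of_le hyx
  have hone : ∀ x ∈ m, ∃ k : ℕ, (1 : ℝ) = k • x := by
    intro x hx
    obtain ⟨j, rfl⟩ := hm x hx
    have hj : (2⁻¹ : ℝ) ^ j ≤ 2⁻¹ ^ 0 := pow_le_one₀ (by norm_num) (by norm_num)
    simpa using exists_two_inv_pow_eq_nsmul_of_le hj
  exact m.exists_parts_sum_eq_of_nsmul_chain hchain zero_le_one hone n (by simpa using hn)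

theorem stmt12 (m : Multiset ℝ)
    (hm : ∀ x ∈ m, ∃ k : ℕ, x = (2:ℝ)^(-(k:ℤ))) :
    ∃ (parts : Multiset (Multiset ℝ)) (r : Multiset ℝ),
      parts.sum + r = m ∧
      (parts.card : ℤ) = ⌊m.sum⌋ ∧
      (∀ p ∈ parts, (p.map id).sum = 1) ∧
      (r.map id).sum = m.sum - (⌊m.sum⌋ : ℝ) ∧
      (r.map id).sum < 1 := by
  simp only [zpow_neg, zpow_natCast, ← inv_pow] at hm
  have hsum₀ : 0 ≤ m.sum := Multiset.sum_nonneg fun x hx => by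
    obtain ⟨k, rfl⟩ := hm x hx
    positivity
  obtain ⟨parts, hcard, hparts, hle⟩ :=
    exists_parts_sum_eq_one_of_forall_eq_two_inv_pow m hm ⌊m.sum⌋₊ (Nat.floor_le hsum₀)
  have hfloor : (⌊m.sum⌋₊ : ℝ) = ⌊m.sum⌋ := natCast_floor_eq_intCast_floor hsum₀
  have hparts_sum : parts.sum.sum = ⌊m.sum⌋₊ := by
    rw [← Multiset.join, Multiset.sum_join, Multiset.map_congr rfl hparts, Multiset.map_const',
      Multiset.sum_replicate, hcard, nsmul_one]
  have hr : (m - parts.sum).sum = m.sum - ⌊m.sum⌋ := by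
    rw [← hfloor, ← hparts_sum, eq_sub_iff_add_eq, add_comm, ← Multiset.sum_add,
      add_tsub_cancel_of_le hle]
  refine ⟨parts, m - parts.sum, add_tsub_cancel_of_le hle, ?_, by simpa using hparts, ?_, ?_⟩
  · rw [hcard, Int.natCast_floor_eq_floor hsum₀]
  · rw [Multiset.map_id, hr]
  · rw [Multiset.map_id, hr, ← hfloor]
    linarith [Nat.lt_floor_add_one m.sum]
end

section
/- Let m be a finite multiset of real numbers each of the form (2/3)·2^{-k} for some natural number k ≥ 1 (i.e., each element lies in {1/3, 1/6, 1/12, ...}), and let S be the sum of m. Then m can be partitioned into at most ⌊S⌋ sub-multisets each with sum at most 1, together with one remaining sub-multiset with sum strictly less than 1. -/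
/-!
Scaled by `3 · 2^J` for `J` large, the elements `(2/3) · 2^(-k)` become powers of two, and since
each is at most `1/3` they all divide the scaled unit `3 · 2^J`. A multiset of such numbers with
total at least the unit contains a sub-multiset summing exactly to it: take a largest element,
which is divisible by all the others, and recurse on the rest of the target. Peeling off
sub-multisets of sum exactly `1` while the total is at least `1` leaves a remainder of sum less
than `1`, and the number of parts peeled off is at most the total.
-/

open Multiset

theorem Multiset.exists_le_sum_map_eq_of_dvd {α : Type*} (w : α → ℕ) (s : Multiset α) (N : ℕ)
    (hchain : ∀ x ∈ s, ∀ y ∈ s, w x ≤ w y → w x ∣ w y) (hdvd : ∀ x ∈ s, w x ∣ N)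
    (hN : N ≤ (s.map w).sum) : ∃ t ≤ s, (t.map w).sum = N := by
  classical
  induction s using Multiset.strongInductionOn generalizing N with
  | _ s IH =>
    rcases Nat.eq_zero_or_pos N with rfl | hNpos
    · exact ⟨0, zero_le _, by simp⟩
    have hs : s ≠ 0 := by rintro rfl; simp at hN; omega
    obtain ⟨x, hxs, hmax⟩ := exists_max_image w hs
    have hcons : x ::ₘ s.erase x = s := cons_erase hxs
    have hsplit : (s.map w).sum = w x + ((s.erase x).map w).sum := by
      rw [← sum_cons, ← map_cons, hcons]
    have hxN : w x ≤ N := Nat.le_of_dvd hNpos (hdvd x hxs)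
    obtain ⟨t, hts, htsum⟩ := IH (s.erase x) (erase_lt.2 hxs) (N - w x)
      (fun y hy z hz => hchain y (mem_of_mem_erase hy) z (mem_of_mem_erase hz))
      (fun y hy => Nat.dvd_sub (hdvd y (mem_of_mem_erase hy))
        (hchain y (mem_of_mem_erase hy) x hxs (hmax y (mem_of_mem_erase hy))))
      (by omega)
    refine ⟨x ::ₘ t, hcons ▸ cons_le_cons x hts, ?_⟩
    rw [map_cons, sum_cons, htsum]
    omega

theorem Multiset.exists_eq_map_of_forall_mem {α β : Type*} (f : β → α) (p : β → Prop)
    (m : Multiset α) (hm : ∀ x ∈ m, ∃ b, p b ∧ x = f b) :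
    ∃ l : Multiset β, (∀ b ∈ l, p b) ∧ l.map f = m := by
  choose b hpb hb using hm
  refine ⟨m.attach.map fun x => b x.1 x.2, ?_, ?_⟩
  · simp only [mem_map]
    rintro _ ⟨x, -, rfl⟩
    exact hpb x.1 x.2
  · rw [map_map]
    conv_rhs => rw [← attach_map_val m]
    exact map_congr rfl fun x _ => (hb x.1 x.2).symm

noncomputable def twoThirdsZPow (k : ℕ) : ℝ := 2 / 3 * 2 ^ (-(k : ℤ))

theorem twoThirdsZPow_mul {k J : ℕ} (hk : k ≤ J) :
    twoThirdsZPow k * ((3 * 2 ^ J : ℕ) : ℝ) = ((2 ^ (J + 1 - k) : ℕ) : ℝ) := by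
  have hpow : (2 : ℝ) ^ (J + 1) = 2 ^ (J + 1 - k) * 2 ^ k := by
    rw [← pow_add, Nat.sub_add_cancel (by omega)]
  rw [twoThirdsZPow, zpow_neg, zpow_natCast]
  push_cast
  field_simp
  rw [← pow_succ', hpow, mul_comm]

theorem Multiset.exists_le_sum_eq_one_of_twoThirdsZPow (m : Multiset ℝ)
    (hm : ∀ x ∈ m, ∃ k : ℕ, 1 ≤ k ∧ x = twoThirdsZPow k) (h1 : 1 ≤ m.sum) :
    ∃ p ≤ m, p.sum = 1 := by
  obtain ⟨l, hl, rfl⟩ := exists_eq_map_of_forall_mem twoThirdsZPow (1 ≤ ·) m hm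
  set J := l.sum
  set N := 3 * 2 ^ J
  set w : ℕ → ℕ := fun k => 2 ^ (J + 1 - k)
  have hJ : ∀ k ∈ l, k ≤ J := fun k hk => le_sum_of_mem hk
  have hscale : ∀ t ≤ l, (t.map twoThirdsZPow).sum * N = ((t.map w).sum : ℕ) := by
    intro t ht
    rw [← sum_map_mul_right, Nat.cast_multiset_sum, map_map]
    exact congrArg sum (map_congr rfl fun k hk => twoThirdsZPow_mul (hJ k (mem_of_le ht hk)))
  have hNpos : (0 : ℝ) < N := by positivity
  have hNle : N ≤ (l.map w).sum := by
    have h := hscale l le_rfl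
    exact_mod_cast (show (N : ℝ) ≤ ((l.map w).sum : ℕ) by rw [← h]; nlinarith)
  obtain ⟨t, htl, htsum⟩ := exists_le_sum_map_eq_of_dvd w l N
    (fun x _ y _ hxy => pow_dvd_pow 2 ((Nat.pow_le_pow_iff_right one_lt_two).1 hxy))
    (fun k hk => Dvd.dvd.mul_left (pow_dvd_pow 2 (by have := hl k hk; omega)) 3)
    hNle
  refine ⟨t.map twoThirdsZPow, map_le_map htl, ?_⟩
  have ht := hscale t htl
  rw [htsum] at ht
  exact (mul_eq_right₀ hNpos.ne').1 ht

theorem Multiset.exists_sum_add_eq_of_exists_le_sum_eq_one (m : Multiset ℝ)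
    (hext : ∀ m' ≤ m, 1 ≤ m'.sum → ∃ p ≤ m', p.sum = 1) :
    ∃ (parts : Multiset (Multiset ℝ)) (r : Multiset ℝ),
      parts.sum + r = m ∧ (∀ p ∈ parts, p.sum = 1) ∧ r.sum < 1 := by
  induction m using Multiset.strongInductionOn with
  | _ m IH =>
    by_cases h1 : m.sum < 1
    · exact ⟨0, m, by simp, by simp, h1⟩
    obtain ⟨p, hpm, hpsum⟩ := hext m le_rfl (not_lt.1 h1)
    have hp : p ≠ 0 := by rintro rfl; simp at hpsum
    obtain ⟨parts, r, hsum, hparts, hr⟩ := IH (m - p)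
      (tsub_le_self.lt_of_ne fun h => hp <| add_eq_right.1 <| h ▸ add_tsub_cancel_of_le hpm)
      (fun m' hm' => hext m' (hm'.trans tsub_le_self))
    refine ⟨p ::ₘ parts, r, ?_, ?_, hr⟩
    · rw [sum_cons, add_assoc, hsum, add_tsub_cancel_of_le hpm]
    · rintro q hq
      rcases mem_cons.1 hq with rfl | hq
      exacts [hpsum, hparts q hq]

theorem stmt13 (m : Multiset ℝ)
    (hm : ∀ x ∈ m, ∃ k : ℕ, 1 ≤ k ∧ x = (2/3) * (2:ℝ)^(-(k:ℤ))) :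
    ∃ (parts : Multiset (Multiset ℝ)) (r : Multiset ℝ),
      parts.sum + r = m ∧
      (parts.card : ℤ) ≤ ⌊m.sum⌋ ∧
      (∀ p ∈ parts, (p.map id).sum ≤ 1) ∧
      (r.map id).sum < 1 := by
  obtain ⟨parts, r, hsum, hparts, hr⟩ := exists_sum_add_eq_of_exists_le_sum_eq_one m
    fun m' hm' => exists_le_sum_eq_one_of_twoThirdsZPow m' fun x hx => hm x (mem_of_le hm' hx)
  have hr0 : 0 ≤ r.sum := sum_nonneg fun x hx => by
    obtain ⟨k, -, rfl⟩ := hm x (mem_of_le (hsum ▸ le_add_left le_rfl) hx)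
    positivity
  have hcard : (parts.card : ℝ) = (parts.map sum).sum := by
    rw [map_congr rfl hparts]
    simp
  refine ⟨parts, r, hsum, ?_, fun p hp => by simp [hparts p hp], by simpa using hr⟩
  rw [Int.le_floor, ← hsum, sum_add, ← join, sum_join]
  push_cast
  linarith
end
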